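/- arXiv:1210.6916 — 3 statements merged into one kernel-verified Lean document; each statement's English description precedes it below -/
import Mathlib

section
/- Let G = (V,E) be a connected n-vertex graph and suppose ξ: V → ℝ is a unit ℓ²-norm eigenvector of the graph Laplacian L(G) with eigenvalue κ = O(n^{−b}) for some b > 0. Then ‖ξ‖₁ = Ω(n^a) for some a > 0 depending only on b. -/
/-!
Let `M = |ξ u|` be the largest entry of `ξ` and `S = ‖ξ‖₁`; then `1 = ‖ξ‖₂² ≤ M S`.
The Dirichlet energy of `ξ`, summed over darts, is `2κ`, so Cauchy–Schwarz along a path from `u`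
gives `(ξ u - ξ pᵢ)² ≤ 2κ i` at its `i`-th vertex. If `κ > 0`, then `ξ ⊥ 𝟙`; after replacing `ξ` by `-ξ`
we may assume `ξ u = M`, and then `ξ w ≤ 0` for some `w`. On a path from `u` to `w` the first
`⌊M² / 8κ⌋ + 1` vertices all carry `|ξ| ≥ M / 2`, whence `M³ ≤ 16 κ S` and
`S⁴ ≥ (M S)³ / (16 κ) ≥ 1 / (16 κ)`.
If `κ = 0`, then `ξ` is constant and `S = √n`.
-/

open Finset Matrix

lemma exists_forall_abs_le_of_sum_sq_eq_one {V : Type*} [Fintype V] {x : V → ℝ}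
    (hnorm : ∑ v, x v ^ 2 = 1) : ∃ u, ∀ v, |x v| ≤ |x u| := by
  obtain ⟨u, -, hu⟩ := exists_max_image univ (fun v => |x v|)
    (nonempty_of_sum_ne_zero (by rw [hnorm]; exact one_ne_zero))
  exact ⟨u, fun v => hu v (mem_univ v)⟩

lemma one_le_abs_mul_sum_abs_of_sum_sq_eq_one {V : Type*} [Fintype V] {x : V → ℝ}
    (hnorm : ∑ v, x v ^ 2 = 1) {u : V} (hmax : ∀ v, |x v| ≤ |x u|) :
    1 ≤ |x u| * ∑ v, |x v| := by
  rw [← hnorm, mul_sum]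
  exact sum_le_sum fun v _ => by
    rw [← sq_abs, sq]
    exact mul_le_mul_of_nonneg_right (hmax v) (abs_nonneg _)

namespace SimpleGraph

variable {V : Type*} {G : SimpleGraph V}

namespace Walk

variable {u v : V}

lemma sub_eq_sum_darts {A : Type*} [AddCommGroup A] (x : V → A) (p : G.Walk u v) :
    x u - x v = (p.darts.map fun d => x d.fst - x d.snd).sum := by
  induction p with
  | nil => simp
  | cons h q ih => simp [← ih]

lemma IsPath.sum_getVert_le_sum [Fintype V] {M : Type*} [AddCommMonoid M] [PartialOrder M]
    [IsOrderedAddMonoid M] {p : G.Walk u v} (hp : p.IsPath) {f : V → M} (hf : 0 ≤ f) {n : ℕ}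
    (hn : n ≤ p.length) : ∑ i ∈ range (n + 1), f (p.getVert i) ≤ ∑ v, f v := by
  classical
  rw [← sum_image (f := f) fun i hi j hj h => hp.getVert_injOn
    (by simp at hi ⊢; omega) (by simp at hj ⊢; omega) h]
  exact sum_le_univ_sum_of_nonneg hf

end Walk

variable [Fintype V] [DecidableRel G.Adj]

def dirichletEnergy (G : SimpleGraph V) [DecidableRel G.Adj] (x : V → ℝ) : ℝ :=
  ∑ d : G.Dart, (x d.fst - x d.snd) ^ 2

lemma dirichletEnergy_nonneg (x : V → ℝ) : 0 ≤ G.dirichletEnergy x :=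
  sum_nonneg fun _ _ => sq_nonneg _

lemma dirichletEnergy_neg (x : V → ℝ) : G.dirichletEnergy (-x) = G.dirichletEnergy x := by
  simp only [dirichletEnergy, Pi.neg_apply, ← neg_sub', neg_sq]

lemma sum_darts_eq_sum_sum_ite_adj {M : Type*} [AddCommMonoid M] (f : V → V → M) :
    ∑ d : G.Dart, f d.fst d.snd = ∑ i, ∑ j, if G.Adj i j then f i j else 0 := by
  rw [← Fintype.sum_prod_type', ← sum_filter]
  exact sum_bij' (fun d _ => d.toProd) (fun p hp => ⟨p, (mem_filter.mp hp).2⟩)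
    (fun d _ => by simp [d.adj]) (fun _ _ => mem_univ _) (fun _ _ => rfl) (fun _ _ => rfl)
    (fun _ _ => rfl)

lemma Walk.IsTrail.sq_sub_le_length_mul_dirichletEnergy {u v : V} {p : G.Walk u v}
    (hp : p.IsTrail) (x : V → ℝ) : (x u - x v) ^ 2 ≤ p.length * G.dirichletEnergy x := by
  classical
  have hnd : p.darts.Nodup := hp.edges_nodup.of_map _
  rw [p.sub_eq_sum_darts x, ← List.sum_toFinset _ hnd, ← length_darts,
    ← List.toFinset_card_of_nodup hnd]
  refine sq_sum_le_card_mul_sum_sq.trans (mul_le_mul_of_nonneg_left ?_ (by positivity))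
  exact sum_le_univ_sum_of_nonneg fun _ => sq_nonneg _

lemma Walk.IsPath.sq_sub_getVert_le {u v : V} {p : G.Walk u v} (hp : p.IsPath) (x : V → ℝ)
    (i : ℕ) : (x u - x (p.getVert i)) ^ 2 ≤ i * G.dirichletEnergy x := by
  refine ((hp.take i).isTrail.sq_sub_le_length_mul_dirichletEnergy x).trans ?_
  gcongr
  · exact dirichletEnergy_nonneg x
  · simp

variable {x : V → ℝ} {κ : ℝ}

lemma abs_pow_three_le_mul_sum_abs (hG : G.Connected) (hκ : 0 < κ)
    (hE : G.dirichletEnergy x ≤ 2 * κ) (hsum : ∑ v, x v = 0) {u : V}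
    (hmax : ∀ v, |x v| ≤ |x u|) : |x u| ^ 3 ≤ 16 * κ * ∑ v, |x v| := by
  wlog hu : 0 ≤ x u generalizing x
  · simpa using this (x := -x) (by rwa [dirichletEnergy_neg]) (by simp [hsum])
      (by simpa using hmax) (by simp; linarith)
  set M := x u
  rw [abs_of_nonneg hu]
  obtain ⟨w, -, hw⟩ : ∃ w ∈ univ, x w ≤ 0 :=
    exists_le_of_sum_le ⟨u, mem_univ u⟩ (by simp [hsum])
  obtain ⟨p, hp⟩ := (hG.preconnected u w).exists_isPath
  have hpath (i : ℕ) : (M - x (p.getVert i)) ^ 2 ≤ i * (2 * κ) :=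
    (hp.sq_sub_getVert_le x i).trans (mul_le_mul_of_nonneg_left hE i.cast_nonneg)
  set d := ⌊M ^ 2 / (8 * κ)⌋₊
  have hd_le : (d : ℝ) * (8 * κ) ≤ M ^ 2 :=
    (le_div_iff₀ (by positivity)).mp (Nat.floor_le (by positivity))
  have hd_lt : M ^ 2 < (d + 1) * (8 * κ) :=
    (div_lt_iff₀ (by positivity)).mp (Nat.lt_floor_add_one _)
  have hd_length : d ≤ p.length := by
    have := hpath p.length
    rw [Walk.getVert_length] at this
    exact_mod_cast (show (d : ℝ) ≤ p.length by nlinarith)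
  have hhalf : ∀ i ∈ range (d + 1), M / 2 ≤ |x (p.getVert i)| := by
    intro i hi
    have hi : (i : ℝ) ≤ d := by exact_mod_cast Nat.lt_succ_iff.mp (mem_range.mp hi)
    nlinarith [hpath i, le_abs_self (x (p.getVert i))]
  calc M ^ 3 ≤ 16 * κ * ((d + 1) * (M / 2)) := by nlinarith
    _ ≤ 16 * κ * ∑ v, |x v| := by
      gcongr
      calc ((d : ℝ) + 1) * (M / 2) = ∑ i ∈ range (d + 1), M / 2 := by simp
        _ ≤ ∑ i ∈ range (d + 1), |x (p.getVert i)| := sum_le_sum hhalf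
        _ ≤ ∑ v, |x v| :=
          hp.sum_getVert_le_sum (f := fun v => |x v|) (fun _ => abs_nonneg _) hd_length

variable [DecidableEq V]

lemma dirichletEnergy_eq_two_mul_dotProduct_mulVec (x : V → ℝ) :
    G.dirichletEnergy x = 2 * (x ⬝ᵥ G.lapMatrix ℝ *ᵥ x) := by
  rw [← toLinearMap₂'_apply', lapMatrix_toLinearMap₂', dirichletEnergy,
    sum_darts_eq_sum_sum_ite_adj fun i j => (x i - x j) ^ 2]
  ring

lemma dirichletEnergy_of_lapMatrix_mulVec_eq_smul (h : G.lapMatrix ℝ *ᵥ x = κ • x) :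
    G.dirichletEnergy x = 2 * κ * ∑ v, x v ^ 2 := by
  rw [dirichletEnergy_eq_two_mul_dotProduct_mulVec, h, dotProduct_smul, smul_eq_mul, dotProduct]
  simp only [sq, mul_assoc]

lemma sum_eq_zero_of_lapMatrix_mulVec_eq_smul (h : G.lapMatrix ℝ *ᵥ x = κ • x) (hκ : κ ≠ 0) :
    ∑ v, x v = 0 := by
  have h1 : (fun _ => 1 : V → ℝ) ᵥ* G.lapMatrix ℝ = 0 := by
    rw [← mulVec_transpose, (isSymm_lapMatrix ℝ G).eq, lapMatrix_mulVec_const_eq_zero]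
  have h2 : (fun _ => 1 : V → ℝ) ⬝ᵥ (κ • x) = 0 := by
    rw [← h, dotProduct_mulVec, h1, zero_dotProduct]
  simpa [dotProduct, hκ, ← mul_sum] using h2

lemma rpow_neg_quarter_le_sum_abs (hG : G.Connected) (heig : G.lapMatrix ℝ *ᵥ x = κ • x)
    (hnorm : ∑ v, x v ^ 2 = 1) (hκ : 0 < κ) : (16 * κ) ^ (-(1 / 4 : ℝ)) ≤ ∑ v, |x v| := by
  obtain ⟨u, hmax⟩ := exists_forall_abs_le_of_sum_sq_eq_one hnorm
  set S := ∑ v, |x v|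
  have hMS := one_le_abs_mul_sum_abs_of_sum_sq_eq_one hnorm hmax
  have hcube := abs_pow_three_le_mul_sum_abs hG hκ
    (by rw [dirichletEnergy_of_lapMatrix_mulVec_eq_smul heig, hnorm, mul_one])
    (sum_eq_zero_of_lapMatrix_mulVec_eq_smul heig hκ.ne') hmax
  have hS4 : (16 * κ)⁻¹ ≤ S ^ 4 := by
    rw [inv_le_iff_one_le_mul₀' (by positivity)]
    calc 1 ≤ (|x u| * S) ^ 3 := one_le_pow₀ hMS
      _ = |x u| ^ 3 * S ^ 3 := mul_pow ..
      _ ≤ 16 * κ * S * S ^ 3 := by gcongr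
      _ = 16 * κ * S ^ 4 := by ring
  calc (16 * κ) ^ (-(1 / 4 : ℝ)) = ((16 * κ)⁻¹) ^ ((4 : ℕ)⁻¹ : ℝ) := by
        rw [Real.inv_rpow (by positivity), ← Real.rpow_neg (by positivity)]
        norm_num
    _ ≤ (S ^ 4) ^ ((4 : ℕ)⁻¹ : ℝ) := by gcongr
    _ = S := Real.pow_rpow_inv_natCast (sum_nonneg fun _ _ => abs_nonneg _) (by norm_num)

lemma sum_abs_eq_sqrt_card (hG : G.Connected) (heig : G.lapMatrix ℝ *ᵥ x = 0)
    (hnorm : ∑ v, x v ^ 2 = 1) : ∑ v, |x v| = √(Fintype.card V) := by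
  obtain ⟨u, -⟩ := exists_forall_abs_le_of_sum_sq_eq_one hnorm
  have hconst (v : V) : x v = x u :=
    (lapMatrix_mulVec_eq_zero_iff_forall_reachable G).mp heig v u (hG.preconnected v u)
  simp only [hconst, sum_const, card_univ, nsmul_eq_mul] at hnorm ⊢
  rw [← Real.sqrt_sq (by positivity : 0 ≤ (Fintype.card V : ℝ) * |x u|), mul_pow, sq_abs]
  congr 1
  linear_combination (Fintype.card V : ℝ) * hnorm

end SimpleGraph

/-- If ξ is a unit eigenvector of the Laplacian of a connected n-vertex graph with
eigenvalue κ = O(n^{−b}), b > 0, then ‖ξ‖₁ = Ω(n^a) for some a > 0 depending only on b. -/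
theorem stmt5 :
    ∀ b : ℝ, 0 < b → ∀ Cb : ℝ, 0 < Cb →
    ∃ a c : ℝ, 0 < a ∧ 0 < c ∧ ∃ N : ℕ, ∀ n : ℕ, N ≤ n →
    ∀ (G : SimpleGraph (Fin n)) (_ : DecidableRel G.Adj), G.Connected →
    ∀ (κ : ℝ) (ξ : Fin n → ℝ),
      (G.lapMatrix ℝ).mulVec ξ = κ • ξ →
      (∑ v, ξ v ^ 2 = 1) →
      κ ≤ Cb * (n : ℝ) ^ (-b) →
      c * (n : ℝ) ^ a ≤ ∑ v, |ξ v| := by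
  intro b hb Cb hCb
  refine ⟨min (b / 4) (1 / 2), min ((16 * Cb) ^ (-(1 / 4 : ℝ))) 1, by positivity, by positivity,
    1, fun n hn G _ hG κ ξ heig hnorm hκ => ?_⟩
  have hn1 : (1 : ℝ) ≤ n := by exact_mod_cast hn
  have hκ0 : 0 ≤ κ := by
    have := G.dirichletEnergy_nonneg ξ
    rw [SimpleGraph.dirichletEnergy_of_lapMatrix_mulVec_eq_smul heig, hnorm] at this
    linarith
  rcases hκ0.eq_or_lt with rfl | hκ0
  · rw [SimpleGraph.sum_abs_eq_sqrt_card hG (by rw [heig, zero_smul]) hnorm, Fintype.card_fin,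
      Real.sqrt_eq_rpow, ← one_mul ((n : ℝ) ^ (1 / 2 : ℝ))]
    gcongr
    exacts [min_le_right _ _, min_le_right _ _]
  calc min ((16 * Cb) ^ (-(1 / 4 : ℝ))) 1 * (n : ℝ) ^ min (b / 4) (1 / 2)
      ≤ (16 * Cb) ^ (-(1 / 4 : ℝ)) * (n : ℝ) ^ (b / 4) := by
        gcongr
        exacts [min_le_left _ _, min_le_left _ _]
    _ = (16 * (Cb * (n : ℝ) ^ (-b))) ^ (-(1 / 4 : ℝ)) := by
        rw [← mul_assoc, Real.mul_rpow (x := 16 * Cb) (by positivity) (by positivity),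
          ← Real.rpow_mul (by positivity)]
        ring_nf
    _ ≤ (16 * κ) ^ (-(1 / 4 : ℝ)) :=
        Real.rpow_le_rpow_of_nonpos (by positivity) (by gcongr) (by norm_num)
    _ ≤ ∑ v, |ξ v| := SimpleGraph.rpow_neg_quarter_le_sum_abs hG heig hnorm hκ0
end

section
/- For s sufficiently large, ∑_{r=1}^{s} ((1 + 3/r) log s − log r + 2)² ≤ 10.1·s + O(log³ s); in particular 16 ∑_{r=1}^{s} ((1+3/r)log s − log r + 2)² < 161·s for all sufficiently large s. -/
/-!
With `a = log s - log r` and `u = 1 / r`, the summand is `(a + 3 u log s + 2) ^ 2`, and since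
`a ≤ log s` it is at most `a² + 4a + 9 log² s · u² + (6 log² s + 12 log s) u + 4`. Comparing with
`∫₁ˢ (log s - log x) ^ k dx` gives `∑ a ≤ s` and `∑ a² ≤ 2s`, while `∑ u ≤ 1 + log s` and
`∑ u² ≤ 2`; hence the sum is at most `10 s + O(log³ s)`, and `log³ s = o(s)`.
-/
open Finset Real Filter

theorem AntitoneOn.sum_Icc_le_add_integral {f : ℝ → ℝ} {a b : ℕ} (hab : a ≤ b)
    (hf : AntitoneOn f (Set.Icc a b)) :
    ∑ i ∈ Icc a b, f i ≤ f a + ∫ x in (a : ℝ)..b, f x := by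
  have := hf.sum_le_integral_Ico hab
  rw [sum_Ico_add' (fun i : ℕ => f i), Ico_add_one_add_one_eq_Ioc] at this
  rw [← add_sum_Ioc_eq_sum_Icc hab]
  linarith

lemma integral_log_sub_log (b : ℝ) : ∫ x in (1 : ℝ)..b, (log b - log x) = b - log b - 1 := by
  rw [intervalIntegral.integral_sub intervalIntegrable_const
    intervalIntegral.intervalIntegrable_log', intervalIntegral.integral_const, integral_log]
  simp
  ring

lemma integral_log_sub_log_sq {b : ℝ} (hb : 0 < b) :
    ∫ x in (1 : ℝ)..b, (log b - log x) ^ 2 = 2 * b - (log b ^ 2 + 2 * log b + 2) := by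
  have hpos : ∀ x ∈ Set.uIcc 1 b, 0 < x := fun x hx => by
    rcases Set.mem_uIcc.1 hx with h | h <;> linarith [h.1]
  have hderiv : ∀ x ∈ Set.uIcc 1 b, HasDerivAt
      (fun x => x * ((log b - log x) ^ 2 + 2 * (log b - log x) + 2)) ((log b - log x) ^ 2) x := by
    intro x hx
    have hx0 := (hpos x hx).ne'
    have hlog : HasDerivAt (fun x => log b - log x) (-x⁻¹) x := (hasDerivAt_log hx0).const_sub _
    refine ((hasDerivAt_id' x).mul (((hlog.pow 2).add (hlog.const_mul 2)).add_const 2)).congr_deriv ?_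
    simp only [Pi.add_apply, Pi.pow_apply]
    field_simp
    ring
  have hcont : ContinuousOn (fun x => (log b - log x) ^ 2) (Set.uIcc 1 b) :=
    (continuousOn_const.sub (continuousOn_log.mono fun x hx => (hpos x hx).ne')).pow 2
  rw [intervalIntegral.integral_eq_sub_of_hasDerivAt hderiv hcont.intervalIntegrable]
  simp [mul_comm]

lemma antitoneOn_log_sub_log (s : ℝ) : AntitoneOn (fun x => log s - log x) (Set.Icc 1 s) :=
  fun _ hx _ _ hxy => sub_le_sub_left (log_le_log (by linarith [hx.1]) hxy) _

lemma sum_log_sub_log_le (s : ℕ) : ∑ r ∈ Icc 1 s, (log s - log r) ≤ s := by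
  rcases Nat.eq_zero_or_pos s with rfl | hs
  · simp
  have := AntitoneOn.sum_Icc_le_add_integral (a := 1) hs (by simpa using antitoneOn_log_sub_log s)
  push_cast at this
  rw [log_one, integral_log_sub_log] at this
  linarith [log_natCast_nonneg s]

lemma sum_log_sub_log_sq_le (s : ℕ) : ∑ r ∈ Icc 1 s, (log s - log r) ^ 2 ≤ 2 * s := by
  rcases Nat.eq_zero_or_pos s with rfl | hs
  · simp
  have hanti : AntitoneOn (fun x => (log s - log x) ^ 2) (Set.Icc 1 (s : ℝ)) :=
    fun x hx y hy hxy => pow_le_pow_left₀ (sub_nonneg.2 (log_le_log (by linarith [hy.1]) hy.2))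
      (antitoneOn_log_sub_log _ hx hy hxy) 2
  have := AntitoneOn.sum_Icc_le_add_integral (a := 1) hs (by simpa using hanti)
  push_cast at this
  rw [log_one, integral_log_sub_log_sq (by exact_mod_cast hs)] at this
  nlinarith [log_natCast_nonneg s]

lemma sum_inv_le_one_add_log (s : ℕ) : ∑ r ∈ Icc 1 s, (r : ℝ)⁻¹ ≤ 1 + log s := by
  have := harmonic_le_one_add_log s
  rw [harmonic, range_eq_Ico, sum_Ico_add' (fun i : ℕ => ((i : ℚ))⁻¹)] at this
  push_cast at this
  simpa [Ico_add_one_right_eq_Icc] using this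

lemma sum_inv_sq_le_two (s : ℕ) : ∑ r ∈ Icc 1 s, ((r : ℝ)⁻¹) ^ 2 ≤ 2 := by
  have hIoo : Ioo 0 (s + 1) = Icc 1 s := by ext; simp; omega
  simpa [hIoo] using sum_Ioo_inv_sq_le (α := ℝ) 0 (s + 1)

lemma sq_add_mul_add_two_le {a L u : ℝ} (ha : a ≤ L) (hL : 0 ≤ L) (hu : 0 ≤ u) :
    (a + 3 * L * u + 2) ^ 2 ≤ a ^ 2 + 4 * a + 9 * L ^ 2 * u ^ 2 + (6 * L ^ 2 + 12 * L) * u + 4 := by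
  nlinarith [mul_nonneg (sub_nonneg.2 ha) (mul_nonneg hL hu)]

lemma sum_sq_le_ten_mul_add_poly_log (s : ℕ) :
    ∑ r ∈ Icc 1 s, ((1 + 3 / (r : ℝ)) * log s - log r + 2) ^ 2
      ≤ 10 * s + 6 * log s ^ 3 + 36 * log s ^ 2 + 12 * log s := by
  set L := log s
  have hL : 0 ≤ L := log_natCast_nonneg s
  calc ∑ r ∈ Icc 1 s, ((1 + 3 / (r : ℝ)) * L - log r + 2) ^ 2
      ≤ ∑ r ∈ Icc 1 s, ((L - log r) ^ 2 + 4 * (L - log r) + 9 * L ^ 2 * ((r : ℝ)⁻¹) ^ 2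
          + (6 * L ^ 2 + 12 * L) * (r : ℝ)⁻¹ + 4) := by
        refine sum_le_sum fun r _ => ?_
        rw [show (1 + 3 / (r : ℝ)) * L - log r + 2 = L - log r + 3 * L * (r : ℝ)⁻¹ + 2 by ring]
        exact sq_add_mul_add_two_le (sub_le_self _ (log_natCast_nonneg r)) hL
          (inv_nonneg.2 r.cast_nonneg)
    _ = ∑ r ∈ Icc 1 s, (L - log r) ^ 2 + 4 * ∑ r ∈ Icc 1 s, (L - log r)
          + 9 * L ^ 2 * ∑ r ∈ Icc 1 s, ((r : ℝ)⁻¹) ^ 2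
          + (6 * L ^ 2 + 12 * L) * ∑ r ∈ Icc 1 s, (r : ℝ)⁻¹ + 4 * s := by
        simp only [sum_add_distrib, ← mul_sum, sum_const, Nat.card_Icc, nsmul_eq_mul]
        push_cast
        ring
    _ ≤ 2 * s + 4 * s + 9 * L ^ 2 * 2 + (6 * L ^ 2 + 12 * L) * (1 + L) + 4 * s := by
        gcongr
        · exact sum_log_sub_log_sq_le s
        · exact sum_log_sub_log_le s
        · exact sum_inv_sq_le_two s
        · exact sum_inv_le_one_add_log s
    _ = 10 * s + 6 * L ^ 3 + 36 * L ^ 2 + 12 * L := by ring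

lemma eventually_mul_log_pow_lt (c : ℝ) (n : ℕ) : ∀ᶠ x : ℝ in atTop, c * log x ^ n < x := by
  filter_upwards [isLittleO_pow_log_id_atTop.bound (c := 1 / (|c| + 1)) (by positivity),
    eventually_gt_atTop 0] with x hbound hx
  rw [norm_eq_abs, id, norm_eq_abs, abs_of_pos hx] at hbound
  calc c * log x ^ n ≤ |c| * |log x ^ n| := (le_abs_self _).trans (abs_mul _ _).le
    _ ≤ |c| * (1 / (|c| + 1) * x) := by gcongr
    _ < x := by
      rw [← mul_assoc, mul_one_div]
      have : |c| / (|c| + 1) < 1 := by rw [div_lt_one (by positivity)]; linarith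
      nlinarith

/-- Deterministic sum estimate: for large s,
∑_{r=1}^s ((1 + 3/r)log s − log r + 2)² ≤ 10.1·s + C·log³ s, and in particular
16·∑_{r=1}^s ((1 + 3/r)log s − log r + 2)² < 161·s. -/
theorem stmt16 :
    (∃ C : ℝ, 0 < C ∧ ∃ N : ℕ, ∀ s : ℕ, N ≤ s →
      ∑ r ∈ Finset.Icc 1 s, ((1 + 3 / (r : ℝ)) * Real.log s - Real.log r + 2) ^ 2
        ≤ 10.1 * (s:ℝ) + C * (Real.log s) ^ 3) ∧
    (∃ N : ℕ, ∀ s : ℕ, N ≤ s →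
      16 * ∑ r ∈ Finset.Icc 1 s, ((1 + 3 / (r : ℝ)) * Real.log s - Real.log r + 2) ^ 2
        < 161 * (s:ℝ)) := by
  have hlog_ge_one : ∀ s : ℕ, 3 ≤ s → 1 ≤ log s := fun s hs => by
    rw [le_log_iff_exp_le (by positivity)]
    have h3 : (3 : ℝ) ≤ s := by exact_mod_cast hs
    linarith [exp_one_lt_d9]
  have hbound : ∀ s : ℕ, 3 ≤ s → ∑ r ∈ Icc 1 s, ((1 + 3 / (r : ℝ)) * log s - log r + 2) ^ 2
      ≤ 10 * s + 54 * log s ^ 3 := fun s hs => by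
    have := hlog_ge_one s hs
    nlinarith [sum_sq_le_ten_mul_add_poly_log s]
  obtain ⟨N, hN⟩ := eventually_atTop.1
    (tendsto_natCast_atTop_atTop.eventually (eventually_mul_log_pow_lt 864 3))
  refine ⟨⟨54, by norm_num, 3, fun s hs => ?_⟩, ⟨max N 3, fun s hs => ?_⟩⟩
  · linarith [hbound s hs, s.cast_nonneg (α := ℝ)]
  · linarith [hbound s (le_of_max_le_right hs), hN s (le_of_max_le_left hs)]
end

section
/- For the random transpositions shuffle on n cards, after t = (1/2 − a)n log n steps (a ∈ (0,1/2) fixed), the expected number of cards never touched is n·(1 − 2/n)^t ≥ (1+o(1)) n^{2a}, and with high probability at least n^{a} cards remain in their starting positions; since at stationarity the expected number of fixed points of a uniform permutation is 1, the mixing time satisfies τ_mix ≥ (1/2 − a) n log n. -/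
open Finset
open scoped Classical

/-!
A card that no step of the shuffle touches stays in its position, and a fixed card is avoided by
one step with probability `2(n-1)²/(2n²) = (1-1/n)²`. Hence the number `U` of untouched cards has
mean `n(1-1/n)^(2t) ≥ n(1-2/n)^t ≳ n^(2a)` when `t ≤ (1/2-a) n log n`. Two distinct cards are
jointly avoided with probability `((1-2/n)²)^t ≤ ((1-1/n)²)^(2t)`, so `Var U ≤ E U` and Chebyshev
gives `U ≥ n^a` with high probability. By Burnside's lemma a uniform permutation has on average one
fixed point, so by Markov it has `n^a` of them with probability at most `n^(-a)`; the event
"at least `n^a` fixed points" therefore separates the shuffled deck from the uniform one by more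
than `1/4` in total variation.
-/

open Filter Topology Real

theorem Fintype.card_filter_forall_mem {α β : Type*} [Fintype α] [DecidableEq α] [Fintype β]
    (S : Finset β) [DecidablePred fun f : α → β => ∀ a, f a ∈ S] :
    #{f : α → β | ∀ a, f a ∈ S} = #S ^ Fintype.card α := by
  have : ({f : α → β | ∀ a, f a ∈ S} : Finset (α → β)) = Fintype.piFinset fun _ => S := by
    ext f; simp [Fintype.mem_piFinset]
  rw [this, Fintype.card_piFinset, prod_const, card_univ]

theorem Fintype.sum_card_filter_forall_mem {α β γ : Type*} [Fintype α] [DecidableEq α]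
    [Fintype β] [Fintype γ] (S : γ → Finset β)
    [∀ f : α → β, DecidablePred fun c => ∀ a, f a ∈ S c] :
    ∑ f : α → β, #{c | ∀ a, f a ∈ S c} = ∑ c, #(S c) ^ Fintype.card α := by
  simp only [card_filter]
  rw [sum_comm]
  simp only [← card_filter, Fintype.card_filter_forall_mem]

theorem Fintype.sum_card_filter_forall_mem_sq {α β γ : Type*} [Fintype α] [DecidableEq α]
    [Fintype β] [DecidableEq β] [Fintype γ] (S : γ → Finset β)
    [∀ f : α → β, DecidablePred fun c => ∀ a, f a ∈ S c] :
    ∑ f : α → β, #{c | ∀ a, f a ∈ S c} ^ 2 = ∑ c, ∑ c', #(S c ∩ S c') ^ Fintype.card α := by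
  have hsq (f : α → β) : #{c | ∀ a, f a ∈ S c} ^ 2
      = #{p : γ × γ | ∀ a, f a ∈ S p.1 ∩ S p.2} := by
    rw [sq, ← card_product]
    congr 1; ext p; simp [forall_and]
  simp only [hsq, Fintype.sum_card_filter_forall_mem, Fintype.sum_prod_type]

/-- `hvar` says that under the uniform measure the variance of `U` is at most its mean. -/
theorem Finset.card_filter_le_half_mean_mul_mean_le {ι : Type*} [Fintype ι] (U : ι → ℝ)
    (hvar : Fintype.card ι * ∑ i, U i ^ 2 ≤ Fintype.card ι * ∑ i, U i + (∑ i, U i) ^ 2) :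
    #{i | U i ≤ (∑ j, U j) / Fintype.card ι / 2} * ((∑ j, U j) / Fintype.card ι)
      ≤ 4 * Fintype.card ι := by
  generalize hN : (Fintype.card ι : ℝ) = N at *
  generalize hm : (∑ j, U j) / N = m
  rcases le_or_gt m 0 with hm0 | hm0
  · exact (mul_nonpos_of_nonneg_of_nonpos (Nat.cast_nonneg _) hm0).trans
      (by rw [← hN]; positivity)
  have hNpos : 0 < N :=
    (hN ▸ Nat.cast_nonneg _ : (0 : ℝ) ≤ N).lt_of_ne' fun h => by simp [← hm, h] at hm0
  have hsum : ∑ i, U i = N * m := by rw [← hm, mul_div_cancel₀ _ hNpos.ne']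
  have hdev : ∑ i, (U i - m) ^ 2 ≤ N * m := by
    have hexpand : ∑ i, (U i - m) ^ 2 = ∑ i, U i ^ 2 - 2 * m * ∑ i, U i + N * m ^ 2 := by
      simp only [sub_sq, sum_add_distrib, sum_sub_distrib, ← mul_sum, ← sum_mul, sum_const,
        card_univ, nsmul_eq_mul, hN]
      ring
    rw [hsum] at hvar hexpand
    have hsq : ∑ i, U i ^ 2 ≤ N * m + N * m ^ 2 :=
      le_of_mul_le_mul_left (by linear_combination hvar) hNpos
    linarith
  have hcheb : #{i | U i ≤ m / 2} * (m / 2) ^ 2 ≤ ∑ i, (U i - m) ^ 2 := by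
    rw [← nsmul_eq_mul]
    refine (card_nsmul_le_sum _ _ _ fun i hi => ?_).trans
      (sum_le_sum_of_subset_of_nonneg (filter_subset _ _) fun i _ _ => sq_nonneg _)
    have := (mem_filter.1 hi).2
    nlinarith
  nlinarith

theorem Finset.sum_sub_sum_le_half_sum_abs_sub {ι : Type*} [Fintype ι] {p q : ι → ℝ}
    (h : ∑ i, p i = ∑ i, q i) (A : Finset ι) :
    ∑ i ∈ A, p i - ∑ i ∈ A, q i ≤ 1 / 2 * ∑ i, |p i - q i| := by
  have hA : ∑ i ∈ A, (p i - q i) ≤ ∑ i ∈ A, |p i - q i| :=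
    sum_le_sum fun i _ => le_abs_self _
  have hAc : ∑ i ∈ Aᶜ, (q i - p i) ≤ ∑ i ∈ Aᶜ, |p i - q i| :=
    sum_le_sum fun i _ => abs_sub_comm (p i) (q i) ▸ le_abs_self _
  rw [← sum_add_sum_compl A p, ← sum_add_sum_compl A q] at h
  rw [← sum_add_sum_compl A fun i => |p i - q i|]
  simp only [sum_sub_distrib] at hA hAc
  linarith

theorem card_filter_mem_div_sub_card_div_le_half_sum_abs {Ω G : Type*} [Fintype Ω] [Nonempty Ω]
    [Fintype G] [Nonempty G] [DecidableEq G] (f : Ω → G) (A : Finset G) :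
    (#{ω | f ω ∈ A} : ℝ) / Fintype.card Ω - #A / Fintype.card G
      ≤ 1 / 2 * ∑ g, |(#{ω | f ω = g} : ℝ) / Fintype.card Ω - 1 / Fintype.card G| := by
  have hΩ : (Fintype.card Ω : ℝ) ≠ 0 := by positivity
  have hG : (Fintype.card G : ℝ) ≠ 0 := by positivity
  have hfib (B : Finset G) :
      ∑ g ∈ B, (#{ω | f ω = g} : ℝ) / Fintype.card Ω = #{ω | f ω ∈ B} / Fintype.card Ω := by
    rw [← sum_div, ← Nat.cast_sum, sum_card_fiberwise_eq_card_filter]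
  have hunif (B : Finset G) : ∑ _g ∈ B, 1 / (Fintype.card G : ℝ) = #B / Fintype.card G := by
    rw [sum_const, nsmul_eq_mul, mul_one_div]
  have h := sum_sub_sum_le_half_sum_abs_sub
    (p := fun g => (#{ω | f ω = g} : ℝ) / Fintype.card Ω) (q := fun _ => 1 / (Fintype.card G : ℝ))
    (by simp only [hfib, hunif, mem_univ, filter_true, card_univ, div_self hΩ, div_self hG]) A
  rwa [hfib, hunif] at h

theorem MulAction.sum_card_fixedBy_eq_card_group_of_pretransitive (G X : Type*) [Group G]
    [MulAction G X] [MulAction.IsPretransitive G X] [Fintype G] [Fintype X] [DecidableEq X]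
    [Nonempty X] :
    ∑ g : G, #{x : X | g • x = x} = Fintype.card G := by
  obtain ⟨hu⟩ := (MulAction.pretransitive_iff_unique_quotient_of_nonempty G X).1 ‹_›
  have h := MulAction.sum_card_fixedBy_eq_card_orbits_mul_card_group G X
  rw [Fintype.card_unique, one_mul] at h
  rw [← h]
  refine sum_congr rfl fun g _ => ?_
  rw [← Fintype.card_subtype]
  rfl

theorem Equiv.Perm.sum_card_fixedPoints {α : Type*} [Fintype α] [DecidableEq α] [Nonempty α] :
    ∑ σ : Equiv.Perm α, #{x | σ x = x} = Fintype.card (Equiv.Perm α) :=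
  MulAction.sum_card_fixedBy_eq_card_group_of_pretransitive (Equiv.Perm α) α

theorem Equiv.Perm.card_filter_le_card_fixedPoints_mul_le {α : Type*} [Fintype α] [DecidableEq α]
    [Nonempty α] (y : ℝ) :
    #{σ : Equiv.Perm α | y ≤ #{x | σ x = x}} * y ≤ Fintype.card (Equiv.Perm α) := by
  rw [← nsmul_eq_mul, ← Equiv.Perm.sum_card_fixedPoints, Nat.cast_sum]
  exact (card_nsmul_le_sum _ _ _ fun σ hσ => (mem_filter.1 hσ).2).trans
    (sum_le_sum_of_subset_of_nonneg (subset_univ _) fun σ _ _ => Nat.cast_nonneg _)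

theorem Real.exp_neg_div_one_sub_mul_le_one_sub_pow {x : ℝ} (hx : x < 1) (t : ℕ) :
    exp (-(x / (1 - x)) * t) ≤ (1 - x) ^ t := by
  have hpos : 0 < 1 - x := by linarith
  rw [← exp_log (pow_pos hpos t), log_pow, exp_le_exp, mul_comm]
  refine mul_le_mul_of_nonneg_left ?_ (Nat.cast_nonneg t)
  calc -(x / (1 - x)) = 1 - (1 - x)⁻¹ := by field_simp; ring
    _ ≤ log (1 - x) := one_sub_inv_le_log_of_pos hpos

-- `log (1 - 2/n) ≥ -2/(n-2)`, and `2/(n-2) · (1/2-a) n log n = (1-2a) log n + 2(1-2a) log n/(n-2)`.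
theorem rpow_mul_exp_le_mul_one_sub_two_div_pow {a : ℝ} {n t : ℕ} (hn : 2 < n)
    (ht : (t : ℝ) ≤ (1/2 - a) * n * log n) :
    (n : ℝ) ^ (2 * a) * exp (-(2 * (1 - 2 * a) * (log n / (n - 2)))) ≤ n * (1 - 2 / n) ^ t := by
  have hn' : (2 : ℝ) < n := by exact_mod_cast hn
  have hn0 : (0 : ℝ) < n := by linarith
  have hx : 2 / (n : ℝ) < 1 := by rw [div_lt_one hn0]; exact hn'
  have hn2 : (n : ℝ) - 2 ≠ 0 := by linarith
  calc (n : ℝ) ^ (2 * a) * exp (-(2 * (1 - 2 * a) * (log n / (n - 2))))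
      = exp (log n - 2 / (n - 2) * ((1/2 - a) * n * log n)) := by
        rw [rpow_def_of_pos hn0, ← exp_add]
        congr 1
        field_simp
        ring
    _ ≤ exp (log n - 2 / (n - 2) * t) := by
        gcongr
    _ = n * exp (-(2 / n / (1 - 2 / n)) * t) := by
        rw [sub_eq_add_neg, exp_add, exp_log hn0]
        congr 2
        field_simp
    _ ≤ n * (1 - 2 / n) ^ t := by
        gcongr
        exact exp_neg_div_one_sub_mul_le_one_sub_pow hx t

theorem eventually_one_sub_mul_rpow_le_mul_one_sub_two_div_pow (a : ℝ) {ε : ℝ} (hε : 0 < ε) :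
    ∀ᶠ n : ℕ in atTop, ∀ t : ℕ, (t : ℝ) ≤ (1/2 - a) * n * log n →
      (1 - ε) * (n : ℝ) ^ (2 * a) ≤ n * (1 - 2 / n) ^ t := by
  have hlog : Tendsto (fun n : ℕ => log n / (n - 2)) atTop (𝓝 0) := by
    refine ((tendsto_pow_log_div_mul_add_atTop 1 (-2) 1 one_ne_zero).comp
      tendsto_natCast_atTop_atTop).congr fun n => ?_
    simp [sub_eq_add_neg]
  have hexp :
      Tendsto (fun n : ℕ => exp (-(2 * (1 - 2 * a) * (log n / (n - 2))))) atTop (𝓝 1) := by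
    have hcont : Continuous fun y => exp (-(2 * (1 - 2 * a) * y)) := by fun_prop
    exact (hcont.tendsto' 0 1 (by simp)).comp hlog
  filter_upwards [eventually_gt_atTop 2, hexp.eventually (lt_mem_nhds (by linarith : 1 - ε < 1))]
    with n hn hclose t ht
  calc (1 - ε) * (n : ℝ) ^ (2 * a)
      ≤ exp (-(2 * (1 - 2 * a) * (log n / (n - 2)))) * (n : ℝ) ^ (2 * a) := by
        gcongr
    _ ≤ n * (1 - 2 / n) ^ t := by
        rw [mul_comm]
        exact rpow_mul_exp_le_mul_one_sub_two_div_pow hn ht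

namespace RandomTranspositions

abbrev Step (n : ℕ) := Fin n × Fin n × Bool

def Step.perm {n : ℕ} (x : Step n) : Equiv.Perm (Fin n) :=
  if x.2.2 then Equiv.swap x.1 x.2.1 else 1

def deck {n t : ℕ} (ω : Fin t → Step n) : Equiv.Perm (Fin n) :=
  (List.ofFn fun s => (ω s).perm).prod

def untouched {n t : ℕ} (ω : Fin t → Step n) : ℕ :=
  #{c | ∀ s, (ω s).1 ≠ c ∧ (ω s).2.1 ≠ c}

theorem Step.perm_apply_of_avoids {n : ℕ} {x : Step n} {c : Fin n} (h : x.1 ≠ c ∧ x.2.1 ≠ c) :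
    x.perm c = c := by
  unfold Step.perm
  split_ifs
  · exact Equiv.swap_apply_of_ne_of_ne h.1.symm h.2.symm
  · rfl

theorem untouched_le_card_fixedPoints_deck {n t : ℕ} (ω : Fin t → Step n) :
    untouched ω ≤ #{c | deck ω c = c} := by
  refine card_le_card fun c hc => ?_
  simp only [mem_filter, mem_univ, true_and] at hc ⊢
  have hstab : deck ω ∈ MulAction.stabilizer (Equiv.Perm (Fin n)) c := by
    refine Subgroup.list_prod_mem _ fun g hg => ?_
    obtain ⟨s, rfl⟩ := List.mem_ofFn.1 hg
    exact Step.perm_apply_of_avoids (hc s)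
  exact hstab

def avoiding {n : ℕ} (K : Finset (Fin n)) : Finset (Step n) :=
  {x | x.1 ∉ K ∧ x.2.1 ∉ K}

theorem card_avoiding {n : ℕ} (K : Finset (Fin n)) : #(avoiding K) = 2 * (n - #K) ^ 2 := by
  have : avoiding K = Kᶜ ×ˢ Kᶜ ×ˢ (univ : Finset Bool) := by
    ext x; simp [avoiding]
  rw [this, card_product, card_product, card_compl, Fintype.card_fin, card_univ,
    Fintype.card_bool]
  ring

theorem untouched_eq_card_filter {n t : ℕ} (ω : Fin t → Step n) :
    untouched ω = #{c | ∀ s, ω s ∈ avoiding {c}} := by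
  simp [untouched, avoiding]

theorem sum_untouched (n t : ℕ) :
    ∑ ω : Fin t → Step n, untouched ω = n * (2 * (n - 1) ^ 2) ^ t := by
  simp only [untouched_eq_card_filter]
  rw [Fintype.sum_card_filter_forall_mem]
  simp [card_avoiding]

theorem sum_untouched_sq (n t : ℕ) :
    ∑ ω : Fin t → Step n, untouched ω ^ 2
      = n * (2 * (n - 1) ^ 2) ^ t + n * (n - 1) * (2 * (n - 2) ^ 2) ^ t := by
  have hpair (c c' : Fin n) : avoiding {c} ∩ avoiding {c'} = avoiding {c, c'} := by
    ext x; simp [avoiding]; tauto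
  have hrow (c : Fin n) : ∑ c', #(avoiding {c, c'}) ^ t
      = (2 * (n - 1) ^ 2) ^ t + (n - 1) * (2 * (n - 2) ^ 2) ^ t := by
    rw [← add_sum_erase _ _ (mem_univ c), sum_congr rfl fun c' hc' => by
      rw [card_avoiding, card_pair (mem_erase.1 hc').1.symm]]
    simp [card_avoiding]
  simp only [untouched_eq_card_filter, Fintype.sum_card_filter_forall_mem_sq, hpair,
    Fintype.card_fin, hrow, sum_const, card_univ, smul_eq_mul]
  ring

theorem card_shuffles (n t : ℕ) : Fintype.card (Fin t → Step n) = (2 * n ^ 2) ^ t := by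
  simp only [Fintype.card_fun, Fintype.card_prod, Fintype.card_fin, Fintype.card_bool]
  ring

theorem card_mul_sum_untouched_sq_le (n t : ℕ) :
    Fintype.card (Fin t → Step n) * ∑ ω : Fin t → Step n, untouched ω ^ 2
      ≤ Fintype.card (Fin t → Step n) * ∑ ω : Fin t → Step n, untouched ω
        + (∑ ω : Fin t → Step n, untouched ω) ^ 2 := by
  have hpair : n * (n - 2) ≤ (n - 1) ^ 2 := by
    rcases n with _ | _ | n
    · simp
    · simp
    · rw [show n + 1 + 1 - 2 = n by omega, show n + 1 + 1 - 1 = n + 1 by omega]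
      nlinarith
  have hstep : 2 * n ^ 2 * (2 * (n - 2) ^ 2) ≤ (2 * (n - 1) ^ 2) ^ 2 := by
    calc 2 * n ^ 2 * (2 * (n - 2) ^ 2) = 4 * (n * (n - 2)) ^ 2 := by ring
      _ ≤ 4 * ((n - 1) ^ 2) ^ 2 := by gcongr
      _ = (2 * (n - 1) ^ 2) ^ 2 := by ring
  rw [sum_untouched, sum_untouched_sq, card_shuffles, mul_add]
  gcongr
  calc (2 * n ^ 2) ^ t * (n * (n - 1) * (2 * (n - 2) ^ 2) ^ t)
      = n * (n - 1) * (2 * n ^ 2 * (2 * (n - 2) ^ 2)) ^ t := by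
        rw [mul_pow (2 * n ^ 2) (2 * (n - 2) ^ 2) t]; ring
    _ ≤ n * n * ((2 * (n - 1) ^ 2) ^ 2) ^ t := by gcongr; omega
    _ = (n * (2 * (n - 1) ^ 2) ^ t) ^ 2 := by rw [pow_right_comm]; ring

theorem mul_one_sub_two_div_pow_le_mean_untouched {n : ℕ} (hn : 2 ≤ n) (t : ℕ) :
    (n : ℝ) * (1 - 2 / n) ^ t
      ≤ (∑ ω : Fin t → Step n, (untouched ω : ℝ)) / Fintype.card (Fin t → Step n) := by
  have hn' : (2 : ℝ) ≤ n := by exact_mod_cast hn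
  have hn0 : (0 : ℝ) < n := by linarith
  have hmean : (∑ ω : Fin t → Step n, (untouched ω : ℝ)) / Fintype.card (Fin t → Step n)
      = n * ((1 - 1 / n) ^ 2) ^ t := by
    rw [← Nat.cast_sum, sum_untouched, card_shuffles]
    push_cast [Nat.cast_sub (by omega : 1 ≤ n)]
    rw [mul_div_assoc, ← div_pow]
    congr 2
    field_simp
  rw [hmean]
  gcongr
  · rw [sub_nonneg, div_le_one hn0]; exact hn'
  · have : (1 - 1 / (n : ℝ)) ^ 2 = 1 - 2 / n + (1 / n) ^ 2 := by ring
    nlinarith [sq_nonneg (1 / (n : ℝ))]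

theorem eventually_card_le_untouched {a : ℝ} (ha : 0 < a) {ε : ℝ} (hε : 0 < ε) :
    ∀ᶠ n : ℕ in atTop, ∀ t : ℕ, (t : ℝ) ≤ (1/2 - a) * n * log n →
      (1 - ε) * Fintype.card (Fin t → Step n)
        ≤ #{ω : Fin t → Step n | (n : ℝ) ^ a ≤ untouched ω} := by
  have hpow : Tendsto (fun n : ℕ => (n : ℝ) ^ a) atTop atTop :=
    (tendsto_rpow_atTop ha).comp tendsto_natCast_atTop_atTop
  filter_upwards [eventually_ge_atTop 2,
    eventually_one_sub_mul_rpow_le_mul_one_sub_two_div_pow a (ε := 1/2) (by norm_num),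
    hpow.eventually_ge_atTop 4, hpow.eventually_ge_atTop (8 / ε)] with n hn hgrowth h4 hε8 t ht
  set N : ℝ := (Fintype.card (Fin t → Step n) : ℝ)
  set m := (∑ ω : Fin t → Step n, (untouched ω : ℝ)) / N
  set y := (n : ℝ) ^ a
  have hm : y ^ 2 / 2 ≤ m := by
    have hsq : (n : ℝ) ^ (2 * a) = y ^ 2 := by
      rw [mul_comm, rpow_mul (Nat.cast_nonneg n), rpow_two]
    have := (hgrowth t ht).trans (mul_one_sub_two_div_pow_le_mean_untouched hn t)
    rw [hsq] at this
    linarith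
  have hcheb := card_filter_le_half_mean_mul_mean_le
    (fun ω : Fin t → Step n => (untouched ω : ℝ))
    (by exact_mod_cast card_mul_sum_untouched_sq_le n t)
  have hbad : (#{ω : Fin t → Step n | (untouched ω : ℝ) < y} : ℝ) ≤ ε * N := by
    have hsub : #{ω : Fin t → Step n | (untouched ω : ℝ) < y}
        ≤ #{ω : Fin t → Step n | (untouched ω : ℝ) ≤ m / 2} := by
      refine card_le_card fun ω hω => ?_
      simp only [mem_filter, mem_univ, true_and] at hω ⊢
      nlinarith
    have hεm : 4 ≤ ε * m := by
      have : 8 ≤ ε * y := by rwa [div_le_iff₀' hε] at hε8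
      nlinarith
    have hN : 0 ≤ N := Nat.cast_nonneg _
    have hsub' := (Nat.cast_le (α := ℝ)).2 hsub
    nlinarith
  have hsplit := card_filter_add_card_filter_not (s := univ)
    (fun ω : Fin t → Step n => y ≤ (untouched ω : ℝ))
  simp only [not_le, card_univ] at hsplit
  have hgood : (#{ω : Fin t → Step n | y ≤ (untouched ω : ℝ)} : ℝ)
      = N - #{ω : Fin t → Step n | (untouched ω : ℝ) < y} := by
    simp only [N, ← hsplit]; push_cast; ring
  rw [hgood]
  linarith

theorem quarter_lt_half_sum_abs_deck_sub {n t : ℕ} [NeZero n] {y : ℝ} (hy : 4 < y)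
    (hmany : (Fintype.card (Fin t → Step n) : ℝ) / 2 ≤ #{ω : Fin t → Step n | y ≤ untouched ω}) :
    1 / 4 < 1 / 2 * ∑ σ : Equiv.Perm (Fin n),
      |(#{ω : Fin t → Step n | deck ω = σ} : ℝ) / Fintype.card (Fin t → Step n)
        - 1 / n.factorial| := by
  set A : Finset (Equiv.Perm (Fin n)) := {σ | y ≤ #{c | σ c = c}}
  have hΩ : (0 : ℝ) < Fintype.card (Fin t → Step n) := by positivity
  have hP :
      1 / 2 ≤ (#{ω : Fin t → Step n | deck ω ∈ A} : ℝ) / Fintype.card (Fin t → Step n) := by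
    rw [le_div_iff₀ hΩ]
    refine le_trans (by linarith) (le_trans hmany (Nat.cast_le.2 (card_le_card fun ω hω => ?_)))
    simp only [A, mem_filter, mem_univ, true_and] at hω ⊢
    exact hω.trans (Nat.cast_le.2 (untouched_le_card_fixedPoints_deck ω))
  have hQ : (#A : ℝ) / n.factorial < 1 / 4 := by
    have hmarkov := Equiv.Perm.card_filter_le_card_fixedPoints_mul_le (α := Fin n) y
    rw [Fintype.card_perm, Fintype.card_fin] at hmarkov
    have hfact : (0 : ℝ) < n.factorial := by positivity
    rw [div_lt_iff₀ hfact]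
    nlinarith [(Nat.cast_nonneg #A : (0 : ℝ) ≤ #A)]
  have htv := card_filter_mem_div_sub_card_div_le_half_sum_abs (deck (t := t)) A
  rw [Fintype.card_perm, Fintype.card_fin] at htv
  linarith

end RandomTranspositions

/-- Coupon-collector lower bound for random transpositions: with the shuffle driven by
t i.i.d. uniform choices ω(s) = (i,j,coin) (swap positions i,j if the coin shows true),
for t ≤ (1/2 − a)n log n and n large: the expected number of never-chosen positions is
≥ n(1−2/n)^t ≥ (1−ε)n^{2a}; with probability ≥ 1−ε at least n^a positions are never
chosen (hence those cards are in their starting positions); a uniform permutation has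
expected number of fixed points 1; and the total variation distance from uniform
exceeds 1/4, so τ_mix ≥ (1/2 − a)n log n. -/
theorem stmt17 (a : ℝ) (ha : a ∈ Set.Ioo (0:ℝ) (1/2)) (ε : ℝ) (hε : 0 < ε) :
    ∃ N : ℕ, ∀ n : ℕ, N ≤ n → ∀ t : ℕ, (t : ℝ) ≤ (1/2 - a) * n * Real.log n →
    letI Ω := Fin t → Fin n × Fin n × Bool
    letI deck : Ω → Equiv.Perm (Fin n) := fun ω =>
      (List.ofFn (fun s : Fin t =>
        if (ω s).2.2 then Equiv.swap (ω s).1 (ω s).2.1 else 1)).prod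
    letI untouched : Ω → ℕ := fun ω =>
      (Finset.univ.filter (fun c : Fin n => ∀ s : Fin t,
        (ω s).1 ≠ c ∧ (ω s).2.1 ≠ c)).card
    ((∑ ω : Ω, (untouched ω : ℝ)) / (Fintype.card Ω) ≥ (n : ℝ) * (1 - 2/n)^t ∧
      (n : ℝ) * (1 - 2/n)^t ≥ (1 - ε) * (n : ℝ) ^ (2*a)) ∧
    (((Finset.univ.filter (fun ω : Ω => (n:ℝ)^a ≤ (untouched ω : ℝ))).card : ℝ)
      ≥ (1 - ε) * Fintype.card Ω) ∧
    ((∑ σ : Equiv.Perm (Fin n),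
        ((Finset.univ.filter (fun i : Fin n => σ i = i)).card : ℝ)) / (Nat.factorial n)
      = 1) ∧
    ((1/2) * ∑ σ : Equiv.Perm (Fin n),
        |((Finset.univ.filter (fun ω : Ω => deck ω = σ)).card : ℝ) / (Fintype.card Ω)
          - 1 / (Nat.factorial n)| > 1/4) := by
  have hpow : Tendsto (fun n : ℕ => (n : ℝ) ^ a) atTop atTop :=
    (tendsto_rpow_atTop ha.1).comp tendsto_natCast_atTop_atTop
  obtain ⟨N, hN⟩ := eventually_atTop.1 <| (eventually_ge_atTop 2).and <|
    (eventually_one_sub_mul_rpow_le_mul_one_sub_two_div_pow a hε).and <|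
    (RandomTranspositions.eventually_card_le_untouched ha.1 hε).and <|
    (RandomTranspositions.eventually_card_le_untouched ha.1 one_half_pos).and
      (hpow.eventually_gt_atTop 4)
  refine ⟨N, fun n hn t ht => ?_⟩
  obtain ⟨hn2, hgrowth, hmany, hhalf, hy⟩ := hN n hn
  have : NeZero n := ⟨by omega⟩
  refine ⟨⟨RandomTranspositions.mul_one_sub_two_div_pow_le_mean_untouched hn2 t, hgrowth t ht⟩,
    hmany t ht, ?_,
    RandomTranspositions.quarter_lt_half_sum_abs_deck_sub hy (by linarith [hhalf t ht])⟩
  rw [← Nat.cast_sum, Equiv.Perm.sum_card_fixedPoints, Fintype.card_perm, Fintype.card_fin,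
    div_self (by positivity)]
end
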